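/- arXiv:1710.04566 — 2 statements merged into one kernel-verified Lean document; each statement's English description precedes it below -/
import Mathlib

section
/- Let x ≤ y in E_J and let φ : x = x₀ ≤ x₁ ≤ ⋯ ≤ x_{r+1} = y be an E_J-multichain with 𝓡_φ ≠ 0. Then x_{i−1} < x_i for all i ∈ {2, 3, …, r+1}; that is, all steps of φ after the first are strict. -/
set_option linter.unusedVariables false

open scoped Classical
noncomputable section
namespace WGI

variable (Γ : Type) [AddCommGroup Γ] [LinearOrder Γ] [IsOrderedAddMonoid Γ]

/-- The group ring `ℤ[Γ]`, with basis `{q^γ : γ ∈ Γ}`. -/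
abbrev LZ := AddMonoidAlgebra ℤ Γ

/-- The basis element `q^γ` of `ℤ[Γ]`. -/
def qp (γ : Γ) : LZ Γ := AddMonoidAlgebra.single γ 1

/-- The bar involution of `ℤ[Γ]`, sending `q^γ` to `q^{-γ}`. -/
def barZ : LZ Γ ≃+* LZ Γ :=
  (AddMonoidAlgebra.domCongr ℤ ℤ (AddEquiv.neg Γ)).toRingEquiv

/-- The coefficient `[q^γ] f`. -/
def coeffq (f : LZ Γ) (γ : Γ) : ℤ := f.coeff γ

/-- The degree of `f ∈ ℤ[Γ]`: the maximum `γ` with `[q^γ] f ≠ 0` (`⊥` for `f = 0`). -/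
def degq (f : LZ Γ) : WithBot Γ := f.coeff.support.max

/-- The truncation `U_{α/2}(f) = Σ_{2γ > α} [q^γ]f · q^γ`. -/
def Uhalf (α : Γ) (f : LZ Γ) : LZ Γ := AddMonoidAlgebra.ofCoeff (Finsupp.filter (fun γ => α < γ + γ) f.coeff)

/-- The truncation `L_{α/2}(f) = Σ_{2γ < α} [q^γ]f · q^γ`. -/
def Lhalf (α : Γ) (f : LZ Γ) : LZ Γ := AddMonoidAlgebra.ofCoeff (Finsupp.filter (fun γ => γ + γ < α) f.coeff)

variable {B W : Type} [Group W] {M : CoxeterMatrix B} (cs : CoxeterSystem M W)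

/-- The sign `ε_w = (-1)^{ℓ(w)}`. -/
def eps (w : W) : ℤ := (-1) ^ (cs.length w)

/-- The Bruhat order on `W`: generated by `u < tu` for reflections `t` with `ℓ(u) < ℓ(tu)`. -/
def BruhatLE : W → W → Prop :=
  Relation.ReflTransGen (fun u v => cs.length u < cs.length v ∧ ∃ t, cs.IsReflection t ∧ v = t * u)

/-- The strict Bruhat order. -/
def BruhatLT (u v : W) : Prop := BruhatLE cs u v ∧ u ≠ v

/-- `x` is a suffix of `y` iff `y = z * x` with `ℓ(y) = ℓ(z) + ℓ(x)`; this is the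
left weak Bruhat order `x ≤_L y`. -/
def IsSuffix (x y : W) : Prop := ∃ z, y = z * x ∧ cs.length y = cs.length z + cs.length x

/-- The set `D_J` of minimum coset representatives. -/
def DJ (J : Set B) : Set W := {w | ∀ j ∈ J, cs.length w < cs.length (w * cs.simple j)}

/-- The subgroup `Γ″` of `Γ` generated by the values `L(s)`, `s ∈ S`. -/
def GammaPP (L : W → Γ) : AddSubgroup Γ :=
  AddSubgroup.closure (Set.range fun i : B => L (cs.simple i))

/-- `f` lies in the subring `ℤ[Γ′]` of `ℤ`-linear combinations of products `∏ q_{s_i}^{n_i}`,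
equivalently the support of `f` is contained in `Γ″`. -/
def InZGammaPrime (L : W → Γ) (f : LZ Γ) : Prop :=
  ∀ γ ∈ f.coeff.support, γ ∈ GammaPP Γ cs L

/-- The `𝓡`-polynomial of a length-one multichain:
`𝓡_{x,y} = q_x^{-1} q_y · bar(R_{x,y})`. -/
def Rsingle (L : W → Γ) (Rp : W → W → LZ Γ) (x y : W) : LZ Γ :=
  qp Γ (L y - L x) * barZ Γ (Rp x y)

/-- The `𝓡`-polynomial `𝓡_φ` of a multichain `φ : x = c 0 ≤ c 1 ≤ ⋯ ≤ c (r+1) = y`,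
defined recursively by `𝓡_φ = 𝓡_{x,x₁} · U_{(L(y)-L(x₁))/2}(q_{x₁}^{-1} q_y bar(𝓡_{φ'}))`
where `φ'` is the tail of `φ`. -/
def RchainAux (L : W → Γ) (Rp : W → W → LZ Γ) : (r : ℕ) → (Fin (r + 2) → W) → LZ Γ
  | 0, c => Rsingle Γ L Rp (c 0) (c 1)
  | r + 1, c =>
      Rsingle Γ L Rp (c 0) (c 1) *
        Uhalf Γ (L (c (Fin.last (r + 2))) - L (c 1))
          (qp Γ (L (c (Fin.last (r + 2))) - L (c 1)) *
            barZ Γ (RchainAux L Rp r (fun i => c i.succ)))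

/-- The `𝓡*`-polynomial `𝓡*_φ` of a multichain `φ : x = c 0 ≤ ⋯ ≤ c (r+1) = y`,
defined recursively by `𝓡*_φ = U_{(L(x_r)-L(x))/2}(q_x^{-1} q_{x_r} bar(𝓡*_{φ'})) · 𝓡*_{x_r,y}`
where `φ'` is the initial segment of `φ`. -/
def RstarAux (L : W → Γ) (Rt : W → W → LZ Γ) : (r : ℕ) → (Fin (r + 2) → W) → LZ Γ
  | 0, c => Rsingle Γ L Rt (c 0) (c 1)
  | r + 1, c =>
      Uhalf Γ (L (c ⟨r + 1, by omega⟩) - L (c 0))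
          (qp Γ (L (c ⟨r + 1, by omega⟩) - L (c 0)) *
            barZ Γ (RstarAux L Rt r (fun i => c i.castSucc))) *
        Rsingle Γ L Rt (c ⟨r + 1, by omega⟩) (c (Fin.last (r + 2)))

/-- An `E_J`-multichain `x = x₀ ≤ x₁ ≤ ⋯ ≤ x_{r+1} = y` (Bruhat order) with all entries in `E`. -/
structure MChain (E : Set W) (x y : W) where
  r : ℕ
  c : Fin (r + 2) → W
  first : c 0 = x
  last : c (Fin.last (r + 1)) = y
  mem : ∀ i, c i ∈ E
  mono : ∀ i : Fin (r + 1), BruhatLE cs (c i.castSucc) (c i.succ)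

/-- An `E_J`-multichain is an `E_J`-chain when all steps are strict. -/
def MChain.IsStrict {E : Set W} {x y : W} (φ : MChain cs E x y) : Prop :=
  ∀ i : Fin (φ.r + 1), BruhatLT cs (φ.c i.castSucc) (φ.c i.succ)

end WGI

/-! If the step `x₁ ≤ x₂` of `φ` is an equality then `𝓡_φ = 0`. The bar involution of
`M(E_J, L)` is unitriangular for the length filtration,
`bar Γ_z ∈ q_z⁻¹ Γ_z + ⟨Γ_w : ℓ w < ℓ z⟩`, because `bar Γ_{sz} = bar(T_s) bar Γ_z` and `T_s`
raises the filtration by one step; comparing coefficients of `Γ_z` gives `R_{z,z} = 1`. So the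
tail `𝓡_{φ'}`, which now starts with `𝓡_{x₁,x₁} = 1`, only involves exponents `γ` with
`2γ ≥ L(y) - L(x₁)`; then `q_{x₁}⁻¹ q_y · bar 𝓡_{φ'}` only involves exponents `γ` with
`2γ ≤ L(y) - L(x₁)`, all of which `U_{(L(y) - L(x₁))/2}` discards. Since `𝓡_φ ≠ 0` forces
`𝓡_{φ'} ≠ 0`, the later steps follow by induction on the tail. -/

namespace WGI

section GroupRing

variable {Γ : Type} [AddCommGroup Γ]

theorem qp_mul_qp (a b : Γ) : qp Γ a * qp Γ b = qp Γ (a + b) := by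
  simp [qp, AddMonoidAlgebra.single_mul_single]

theorem qp_zero : qp Γ (0 : Γ) = 1 := rfl

theorem isUnit_qp (a : Γ) : IsUnit (qp Γ a) :=
  IsUnit.of_mul_eq_one (qp Γ (-a)) (by rw [qp_mul_qp, add_neg_cancel, qp_zero])

theorem coeff_barZ (f : LZ Γ) (γ : Γ) : (barZ Γ f).coeff γ = f.coeff (-γ) := by
  simp [barZ, AddMonoidAlgebra.coeff_domCongr]

theorem coeff_qp_mul (a : Γ) (f : LZ Γ) (γ : Γ) : (qp Γ a * f).coeff γ = f.coeff (γ - a) := by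
  simp [qp, AddMonoidAlgebra.coeff_single_mul_apply, sub_eq_neg_add]

theorem eq_zero_of_mem_support_one {γ : Γ} (h : γ ∈ (1 : LZ Γ).coeff.support) : γ = 0 := by
  simpa using Finsupp.support_single_subset h

variable [LinearOrder Γ]

theorem coeff_Uhalf (α : Γ) (f : LZ Γ) (γ : Γ) :
    (Uhalf Γ α f).coeff γ = if α < γ + γ then f.coeff γ else 0 := by
  rw [Uhalf, AddMonoidAlgebra.coeff_ofCoeff, Finsupp.filter_apply]

theorem Uhalf_zero (α : Γ) : Uhalf Γ α 0 = 0 := by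
  ext γ
  simp [coeff_Uhalf]

theorem lt_add_of_mem_support_Uhalf {α γ : Γ} {f : LZ Γ}
    (h : γ ∈ (Uhalf Γ α f).coeff.support) : α < γ + γ := by
  by_contra hγ
  simp [coeff_Uhalf, hγ] at h

theorem Uhalf_eq_zero {α : Γ} {f : LZ Γ} (h : ∀ γ ∈ f.coeff.support, γ + γ ≤ α) :
    Uhalf Γ α f = 0 := by
  ext γ
  by_cases hγ : γ ∈ f.coeff.support
  · simp [coeff_Uhalf, not_lt.2 (h γ hγ)]
  · simp_all [coeff_Uhalf]

/-- The coefficient of `q^γ` in `q^α · bar t` is that of `q^(α - γ)` in `t`, and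
`α ≤ 2(α - γ)` forces `2γ ≤ α`. -/
theorem Uhalf_qp_mul_barZ_eq_zero [IsOrderedAddMonoid Γ] {α : Γ} {t : LZ Γ}
    (ht : ∀ γ ∈ t.coeff.support, α ≤ γ + γ) :
    Uhalf Γ α (qp Γ α * barZ Γ t) = 0 := by
  refine Uhalf_eq_zero fun γ hγ => ?_
  rw [Finsupp.mem_support_iff, coeff_qp_mul, coeff_barZ, neg_sub] at hγ
  have h := ht (α - γ) (Finsupp.mem_support_iff.2 hγ)
  rw [← sub_nonneg] at h ⊢
  convert h using 1
  abel

end GroupRing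

section Coxeter

variable {B W : Type} [Group W] {M : CoxeterMatrix B} {cs : CoxeterSystem M W}

theorem BruhatLE.length_le {u v : W} (h : BruhatLE cs u v) : cs.length u ≤ cs.length v := by
  induction h with
  | refl => rfl
  | tail _ step ih => exact ih.trans step.1.le

theorem BruhatLT.length_lt {u v : W} (h : BruhatLT cs u v) : cs.length u < cs.length v := by
  obtain ⟨hle, hne⟩ := h
  rcases Relation.ReflTransGen.cases_head hle with rfl | ⟨w, huw, hwv⟩
  · exact absurd rfl hne
  · exact huw.1.trans_le (BruhatLE.length_le hwv)

variable (cs)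

theorem simple_mul_mem_of_length_lt {E : Set W}
    (hIdeal : ∀ y ∈ E, ∀ x : W, IsSuffix cs x y → x ∈ E) (i : B) (w : W) (hw : w ∈ E)
    (hlt : cs.length (cs.simple i * w) < cs.length w) : cs.simple i * w ∈ E := by
  refine hIdeal w hw _ ⟨cs.simple i, (cs.simple_mul_simple_cancel_left i).symm, ?_⟩
  rw [cs.length_simple]
  have := cs.isLeftDescent_iff.1 hlt
  omega

theorem eps_mul_self (w : W) : eps cs w * eps cs w = 1 := by
  rw [eps, ← pow_add]
  exact Even.neg_one_pow ⟨_, rfl⟩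

end Coxeter

section BasisCoord

variable {W R MM : Type} [Semiring R] [AddCommMonoid MM] [Module R MM] {E : Set W} {G : W → MM}

theorem repr_finsum_mem_smul (b : Module.Basis E R MM) (hb : ∀ y : E, b y = G y) (f : W → R)
    (hf : (E ∩ Function.support fun x => f x • G x).Finite) (z : E) :
    b.repr (∑ᶠ x ∈ E, f x • G x) z = f z := by
  have hrepr : ∀ x (hx : x ∈ E), b.repr (f x • G x) z = f x * Finsupp.single ⟨x, hx⟩ 1 z :=
    fun x hx => by rw [map_smul, ← hb ⟨x, hx⟩, b.repr_self, Finsupp.smul_apply, smul_eq_mul]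
  rw [finsum_mem_eq_sum _ hf, map_sum, Finsupp.finsetSum_apply,
    Finset.sum_eq_single (z : W)]
  · rw [hrepr z z.2, Finsupp.single_eq_same, mul_one]
  · intro x hx hxz
    rw [hrepr x (hf.mem_toFinset.1 hx).1, Finsupp.single_eq_of_ne', mul_zero]
    exact fun h => hxz (congrArg Subtype.val h)
  · intro hz
    have h0 : f z • G z = 0 := by
      by_contra h
      exact hz (hf.mem_toFinset.2 ⟨z.2, h⟩)
    rw [h0, map_zero, Finsupp.zero_apply]

end BasisCoord

section LowerSpan

variable {B W : Type} [Group W] {M : CoxeterMatrix B} (cs : CoxeterSystem M W)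

def lowerSpan (R : Type) [Semiring R] {MM : Type} [AddCommMonoid MM] [Module R MM]
    (E : Set W) (G : W → MM) (n : ℕ) : Submodule R MM :=
  Submodule.span R (G '' {w | w ∈ E ∧ cs.length w < n})

variable {R : Type} [Semiring R] {MM : Type} [AddCommMonoid MM] [Module R MM]
  {E : Set W} {G : W → MM}

theorem G_mem_lowerSpan {w : W} {n : ℕ} (hw : w ∈ E) (hn : cs.length w < n) :
    G w ∈ lowerSpan cs R E G n :=
  Submodule.subset_span ⟨w, ⟨hw, hn⟩, rfl⟩

theorem lowerSpan_mono {m n : ℕ} (h : m ≤ n) : lowerSpan cs R E G m ≤ lowerSpan cs R E G n :=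
  Submodule.span_mono (Set.image_mono fun _ hw => ⟨hw.1, hw.2.trans_le h⟩)

theorem smul_mem_lowerSpan_succ {A : Type} [Monoid A] [DistribMulAction A MM]
    [SMulCommClass A R MM] {a : A}
    (hG : ∀ w ∈ E, a • G w ∈ lowerSpan cs R E G (cs.length w + 2))
    {n : ℕ} {v : MM} (hv : v ∈ lowerSpan cs R E G n) : a • v ∈ lowerSpan cs R E G (n + 1) := by
  induction hv using Submodule.span_induction with
  | mem _ hm =>
    obtain ⟨w, ⟨hw, hwn⟩, rfl⟩ := hm
    exact lowerSpan_mono cs (by omega) (hG w hw)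
  | zero => rw [smul_zero]; exact zero_mem _
  | add _ _ _ _ hu hv => rw [smul_add]; exact add_mem hu hv
  | smul r _ _ hu => rw [smul_comm]; exact Submodule.smul_mem _ r hu

theorem repr_eq_zero_of_mem_lowerSpan (b : Module.Basis E R MM) (hb : ∀ y : E, b y = G y)
    {n : ℕ} {v : MM} (hv : v ∈ lowerSpan cs R E G n) (z : E) (hz : n ≤ cs.length (z : W)) :
    b.repr v z = 0 := by
  have hker : lowerSpan cs R E G n ≤ LinearMap.ker (b.coord z) := by
    rw [lowerSpan, Submodule.span_le]
    rintro _ ⟨w, ⟨hw, hwn⟩, rfl⟩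
    rw [SetLike.mem_coe, LinearMap.mem_ker, Module.Basis.coord_apply, ← hb ⟨w, hw⟩,
      b.repr_self, Finsupp.single_eq_of_ne]
    rintro rfl
    exact absurd hz (not_le.2 hwn)
  exact hker hv

end LowerSpan

section WGraphModule

variable {Γ : Type} [AddCommGroup Γ]
  {B W : Type} [Group W] {M : CoxeterMatrix B} (cs : CoxeterSystem M W)
  {MM : Type} [AddCommGroup MM] [Module (LZ Γ) MM] {L : W → Γ} {E : Set W} {G : W → MM}

theorem T_simple_smul_G_mem_lowerSpan {H : Type} [Ring H] [Module H MM] {T : W → H} {J : Set B}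
    (hdesc : ∀ (i : B) (w : W), w ∈ E → cs.length (cs.simple i * w) < cs.length w →
      cs.simple i * w ∈ E)
    (hSD : ∀ (i : B) (y : W), y ∈ E → cs.length (cs.simple i * y) < cs.length y →
      T (cs.simple i) • G y =
        qp Γ (L (cs.simple i)) • G (cs.simple i * y) + (qp Γ (L (cs.simple i)) - 1) • G y)
    (hSA : ∀ (i : B) (y : W), y ∈ E → cs.length y < cs.length (cs.simple i * y) →
      cs.simple i * y ∈ E → T (cs.simple i) • G y = G (cs.simple i * y))
    (hWD : ∀ (i : B) (y : W), y ∈ E → cs.length y < cs.length (cs.simple i * y) →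
      cs.simple i * y ∉ DJ cs J → T (cs.simple i) • G y = - G y)
    (hWA : ∀ (i : B) (y : W), y ∈ E → cs.length y < cs.length (cs.simple i * y) →
      cs.simple i * y ∈ DJ cs J → cs.simple i * y ∉ E →
      ∃ rr : W → LZ Γ, (∀ z : W, rr z ≠ 0 → z ∈ E ∧ BruhatLT cs z (cs.simple i * y)) ∧
        (∀ z : W, ∃ g : LZ Γ, rr z = qp Γ (L (cs.simple i)) * g) ∧
        {z : W | rr z ≠ 0}.Finite ∧
        T (cs.simple i) • G y = qp Γ (L (cs.simple i)) • G y - ∑ᶠ z : W, rr z • G z)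
    (i : B) (w : W) (hw : w ∈ E) :
    T (cs.simple i) • G w ∈ lowerSpan cs (LZ Γ) E G (cs.length w + 2) := by
  rcases cs.length_simple_mul w i with hasc | hdes
  · by_cases hswE : cs.simple i * w ∈ E
    · rw [hSA i w hw (by omega) hswE]
      exact G_mem_lowerSpan cs hswE (by omega)
    by_cases hswD : cs.simple i * w ∈ DJ cs J
    · obtain ⟨rr, hrr, -, hfin, hTw⟩ := hWA i w hw (by omega) hswD hswE
      have hsupp : (Function.support fun z => rr z • G z) ⊆ hfin.toFinset :=
        fun z hz => hfin.mem_toFinset.2 fun h0 => hz (by simp [h0])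
      rw [hTw, finsum_eq_sum_of_support_subset _ hsupp]
      refine sub_mem (Submodule.smul_mem _ _ (G_mem_lowerSpan cs hw (by omega)))
        (sum_mem fun z hz => Submodule.smul_mem _ _ ?_)
      obtain ⟨hzE, hzlt⟩ := hrr z (hfin.mem_toFinset.1 hz)
      exact G_mem_lowerSpan cs hzE (by have := hzlt.length_lt; omega)
    · rw [hWD i w hw (by omega) hswD]
      exact neg_mem (G_mem_lowerSpan cs hw (by omega))
  · rw [hSD i w hw (by omega)]
    exact add_mem
      (Submodule.smul_mem _ _ (G_mem_lowerSpan cs (hdesc i w hw (by omega)) (by omega)))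
      (Submodule.smul_mem _ _ (G_mem_lowerSpan cs hw (by omega)))

theorem barM_G_sub_mem_lowerSpan {H : Type} [Ring H] [Algebra (LZ Γ) H] [Module H MM]
    [IsScalarTower (LZ Γ) H MM] {T : W → H}
    (hLadd : ∀ u v : W, cs.length (u * v) = cs.length u + cs.length v →
      L (u * v) = L u + L v)
    (hdesc : ∀ (i : B) (w : W), w ∈ E → cs.length (cs.simple i * w) < cs.length w →
      cs.simple i * w ∈ E)
    (hSA : ∀ (i : B) (y : W), y ∈ E → cs.length y < cs.length (cs.simple i * y) →
      cs.simple i * y ∈ E → T (cs.simple i) • G y = G (cs.simple i * y))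
    (hTG : ∀ (i : B), ∀ w ∈ E,
      T (cs.simple i) • G w ∈ lowerSpan cs (LZ Γ) E G (cs.length w + 2))
    {barM : MM → MM} (hbarMone : barM (G 1) = G 1)
    (hbarMT : ∀ (i : B) (y : W), y ∈ E → barM (T (cs.simple i) • G y) =
      qp Γ (-(L (cs.simple i))) • T (cs.simple i) • barM (G y) +
        (qp Γ (-(L (cs.simple i))) - 1) • barM (G y))
    {z : W} (hz : z ∈ E) :
    barM (G z) - qp Γ (-(L z)) • G z ∈ lowerSpan cs (LZ Γ) E G (cs.length z) := by
  obtain ⟨n, hn⟩ : ∃ n, cs.length z = n := ⟨_, rfl⟩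
  induction n generalizing z with
  | zero =>
    obtain rfl := cs.length_eq_zero_iff.1 hn
    have hL1 : L 1 = 0 := by simpa using hLadd 1 1 (by simp)
    rw [hbarMone, hL1, neg_zero, qp_zero, one_smul, sub_self]
    exact zero_mem _
  | succ n ih =>
    obtain ⟨i, hi⟩ := cs.exists_leftDescent_of_ne_one (w := z) (by rintro rfl; simp at hn)
    set z' := cs.simple i * z
    have hz' : z' ∈ E := hdesc i z hz hi
    have hlen : cs.length z' + 1 = cs.length z := cs.isLeftDescent_iff.1 hi
    have hcancel : cs.simple i * z' = z := cs.simple_mul_simple_cancel_left i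
    have hTz' : T (cs.simple i) • G z' = G z := by
      rw [hSA i z' hz' (by rw [hcancel]; omega) (by rwa [hcancel]), hcancel]
    have hLz : -(L (cs.simple i)) + -(L z') = -(L z) := by
      rw [← neg_add, ← hLadd _ _ (by rw [cs.length_simple, hcancel]; omega), hcancel]
    set v' := barM (G z') - qp Γ (-(L z')) • G z'
    have hv' : v' ∈ lowerSpan cs (LZ Γ) E G (cs.length z') := ih hz' (by omega)
    have hsplit : barM (G z') = qp Γ (-(L z')) • G z' + v' := (add_sub_cancel _ _).symm
    have hbarz : barM (G z) - qp Γ (-(L z)) • G z =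
        qp Γ (-(L (cs.simple i))) • T (cs.simple i) • v' +
          (qp Γ (-(L (cs.simple i))) - 1) • barM (G z') := by
      rw [← hTz', hbarMT i z' hz', hsplit, smul_add (T (cs.simple i)), smul_comm, hTz',
        smul_add, smul_smul, qp_mul_qp, hLz, ← hsplit]
      abel
    have hbarz' : barM (G z') ∈ lowerSpan cs (LZ Γ) E G (cs.length z) := by
      rw [hsplit]
      exact add_mem (Submodule.smul_mem _ _ (G_mem_lowerSpan cs hz' (by omega)))
        (lowerSpan_mono cs (by omega) hv')
    rw [hbarz, ← hlen]
    exact add_mem (Submodule.smul_mem _ _ (smul_mem_lowerSpan_succ cs (hTG i) hv'))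
      (Submodule.smul_mem _ _ (hlen ▸ hbarz'))

theorem Rp_self_eq_one (b : Module.Basis E (LZ Γ) MM) (hb : ∀ y : E, b y = G y)
    {barM : MM → MM} {Rp : W → W → LZ Γ} {z : W} (hz : z ∈ E)
    (hRpdef : barM (G z) =
      ∑ᶠ x ∈ E, (((eps cs x * eps cs z : ℤ) : LZ Γ) * qp Γ (-(L z)) * Rp x z) • G x)
    (hlower : barM (G z) - qp Γ (-(L z)) • G z ∈ lowerSpan cs (LZ Γ) E G (cs.length z)) :
    Rp z z = 1 := by
  have hcoord : b.repr (barM (G z)) ⟨z, hz⟩ = qp Γ (-(L z)) := by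
    rw [← sub_add_cancel (barM (G z)) (qp Γ (-(L z)) • G z), map_add, Finsupp.add_apply,
      repr_eq_zero_of_mem_lowerSpan cs b hb hlower _ le_rfl, zero_add, map_smul, ← hb ⟨z, hz⟩,
      b.repr_self, Finsupp.smul_apply, Finsupp.single_eq_same, smul_eq_mul, mul_one]
  by_cases hfin : (E ∩ Function.support fun x =>
      (((eps cs x * eps cs z : ℤ) : LZ Γ) * qp Γ (-(L z)) * Rp x z) • G x).Finite
  · rw [hRpdef, repr_finsum_mem_smul b hb _ hfin, eps_mul_self, Int.cast_one, one_mul] at hcoord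
    exact (isUnit_qp _).mul_left_cancel (hcoord.trans (mul_one _).symm)
  · rw [hRpdef, finsum_mem_eq_zero_of_infinite hfin, map_zero, Finsupp.zero_apply] at hcoord
    exact absurd hcoord.symm (isUnit_qp _).ne_zero

end WGraphModule

section Chain

variable {Γ : Type} [AddCommGroup Γ] {W : Type} {L : W → Γ} {Rp : W → W → LZ Γ}

theorem Rsingle_self {z : W} (h : Rp z z = 1) : Rsingle Γ L Rp z z = 1 := by
  rw [Rsingle, h, map_one, mul_one, sub_self, qp_zero]

variable [LinearOrder Γ]

theorem le_add_of_mem_support_RchainAux {r : ℕ} {c : Fin (r + 2) → W} (h01 : c 0 = c 1)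
    (hR : Rp (c 0) (c 0) = 1) {γ : Γ} (hγ : γ ∈ (RchainAux Γ L Rp r c).coeff.support) :
    L (c (Fin.last (r + 1))) - L (c 0) ≤ γ + γ := by
  cases r with
  | zero =>
    rw [RchainAux, ← h01, Rsingle_self hR] at hγ
    rw [eq_zero_of_mem_support_one hγ, show c (Fin.last 1) = c 0 from h01.symm, sub_self,
      add_zero]
  | succ r =>
    rw [RchainAux, ← h01, Rsingle_self hR, one_mul] at hγ
    exact (lt_add_of_mem_support_Uhalf hγ).le

variable [IsOrderedAddMonoid Γ]

theorem RchainAux_succ_eq_zero_of_eq {r : ℕ} {c : Fin (r + 3) → W}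
    (hR : Rp (c 1) (c 1) = 1) (h12 : c 1 = c 2) : RchainAux Γ L Rp (r + 1) c = 0 := by
  rw [RchainAux]
  refine mul_eq_zero_of_right _ (Uhalf_qp_mul_barZ_eq_zero fun γ hγ => ?_)
  simpa [Fin.succ_last] using le_add_of_mem_support_RchainAux (c := fun i => c i.succ) h12 hR hγ

theorem castSucc_ne_succ_of_RchainAux_ne_zero {r : ℕ} {c : Fin (r + 2) → W}
    (hR : ∀ i, Rp (c i) (c i) = 1) (hne : RchainAux Γ L Rp r c ≠ 0)
    (i : Fin (r + 1)) (hi : 1 ≤ (i : ℕ)) : c i.castSucc ≠ c i.succ := by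
  induction r with
  | zero => omega
  | succ r ih =>
    obtain ⟨j, rfl⟩ := Fin.exists_succ_eq.2 (Fin.pos_iff_ne_zero.1 hi)
    rcases Nat.eq_zero_or_pos j with hj | hj
    · obtain rfl : j = 0 := Fin.ext hj
      exact fun h12 => hne (RchainAux_succ_eq_zero_of_eq (hR 1) h12)
    · have htail : RchainAux Γ L Rp r (fun k => c k.succ) ≠ 0 := fun h0 =>
        hne (by rw [RchainAux, h0, map_zero, mul_zero, Uhalf_zero, mul_zero])
      rw [← Fin.succ_castSucc]
      exact ih (fun k => hR k.succ) htail j hj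

end Chain

theorem stmt_9_general
    {B W : Type} [Group W] {M : CoxeterMatrix B} (cs : CoxeterSystem M W)
    (Γ : Type) [AddCommGroup Γ] [LinearOrder Γ] [IsOrderedAddMonoid Γ]
    -- `L` is a weight function on `W` with values in `Γ`, nonnegative on simple reflections
    (L : W → Γ)
    (hLadd : ∀ u v : W, cs.length (u * v) = cs.length u + cs.length v →
      L (u * v) = L u + L v)
    -- `H` is the Hecke algebra of `(W, S, L)`, free over `ℤ[Γ]` with basis `{T_w}`
    {H : Type} [Ring H] [Algebra (LZ Γ) H]
    (T : Module.Basis W (LZ Γ) H)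
    -- the bar involution on `H`
    (barH : H ≃+* H)
    (hbarHT : ∀ i : B, barH (T (cs.simple i)) =
      qp Γ (-(L (cs.simple i))) • T (cs.simple i) + (qp Γ (-(L (cs.simple i))) - 1) • (1 : H))
    -- `E = E_J ⊆ D_J` is an ideal in the left weak Bruhat order
    (J : Set B) (E : Set W)
    (hIdeal : ∀ y ∈ E, ∀ x : W, IsSuffix cs x y → x ∈ E)
    -- `E` is a `W`-graph ideal: the module `M(E_J, L)` with basis `{Γ_y := G y : y ∈ E}`
    {MM : Type} [AddCommGroup MM] [Module (LZ Γ) MM] [Module H MM]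
    [IsScalarTower (LZ Γ) H MM]
    (G : W → MM)
    (hGbasis : ∃ b : Module.Basis ↥E (LZ Γ) MM, ∀ y : ↥E, b y = G ↑y)
    (hSD : ∀ (i : B) (y : W), y ∈ E → cs.length (cs.simple i * y) < cs.length y →
      T (cs.simple i) • G y =
        qp Γ (L (cs.simple i)) • G (cs.simple i * y) + (qp Γ (L (cs.simple i)) - 1) • G y)
    (hSA : ∀ (i : B) (y : W), y ∈ E → cs.length y < cs.length (cs.simple i * y) →
      cs.simple i * y ∈ E → T (cs.simple i) • G y = G (cs.simple i * y))
    (hWD : ∀ (i : B) (y : W), y ∈ E → cs.length y < cs.length (cs.simple i * y) →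
      cs.simple i * y ∉ DJ cs J → T (cs.simple i) • G y = - G y)
    (hWA : ∀ (i : B) (y : W), y ∈ E → cs.length y < cs.length (cs.simple i * y) →
      cs.simple i * y ∈ DJ cs J → cs.simple i * y ∉ E →
      ∃ rr : W → LZ Γ, (∀ z : W, rr z ≠ 0 → z ∈ E ∧ BruhatLT cs z (cs.simple i * y)) ∧
        (∀ z : W, ∃ g : LZ Γ, rr z = qp Γ (L (cs.simple i)) * g) ∧
        {z : W | rr z ≠ 0}.Finite ∧
        T (cs.simple i) • G y = qp Γ (L (cs.simple i)) • G y - ∑ᶠ z : W, rr z • G z)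
    -- the `ℤ[Γ]`-semilinear bar involution on `M(E_J, L)`
    (barM : MM → MM)
    (hbarMone : barM (G 1) = G 1)
    (hbarMT : ∀ (w y : W), y ∈ E → barM (T w • G y) = barH (T w) • barM (G y))
    -- the weighted `R`-polynomials
    (Rp : W → W → LZ Γ)
    (hRpdef : ∀ y ∈ E, barM (G y) =
      ∑ᶠ x ∈ E, (((eps cs x * eps cs y : ℤ) : LZ Γ) * qp Γ (-(L y)) * Rp x y) • G x)
    (x y : W)
    (r : ℕ) (c : Fin (r + 2) → W)
    (hcmem : ∀ i, c i ∈ E)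
    (hcmono : ∀ i : Fin (r + 1), BruhatLE cs (c i.castSucc) (c i.succ))
    (hRne : RchainAux Γ L Rp r c ≠ 0)
    :
    ∀ i : Fin (r + 1), 1 ≤ (i : ℕ) → BruhatLT cs (c i.castSucc) (c i.succ) := by
  obtain ⟨b, hb⟩ := hGbasis
  have hdesc := simple_mul_mem_of_length_lt cs hIdeal
  have hTG := T_simple_smul_G_mem_lowerSpan cs hdesc hSD hSA hWD hWA
  have hbarMT' : ∀ (i : B) (y : W), y ∈ E → barM (T (cs.simple i) • G y) =
      qp Γ (-(L (cs.simple i))) • T (cs.simple i) • barM (G y) +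
        (qp Γ (-(L (cs.simple i))) - 1) • barM (G y) := by
    intro i y hy
    rw [hbarMT _ _ hy, hbarHT, add_smul, smul_assoc, smul_assoc, one_smul]
  have hRself : ∀ z ∈ E, Rp z z = 1 := fun z hz =>
    Rp_self_eq_one cs b hb hz (hRpdef z hz)
      (barM_G_sub_mem_lowerSpan cs hLadd hdesc hSA hTG hbarMone hbarMT' hz)
  exact fun i hi =>
    ⟨hcmono i, castSucc_ne_succ_of_RchainAux_ne_zero (fun j => hRself _ (hcmem j)) hRne i hi⟩

theorem stmt_9
    {B W : Type} [Group W] {M : CoxeterMatrix B} (cs : CoxeterSystem M W)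
    (Γ : Type) [AddCommGroup Γ] [LinearOrder Γ] [IsOrderedAddMonoid Γ]
    -- `L` is a weight function on `W` with values in `Γ`, nonnegative on simple reflections
    (L : W → Γ)
    (hLadd : ∀ u v : W, cs.length (u * v) = cs.length u + cs.length v →
      L (u * v) = L u + L v)
    (hLpos : ∀ i : B, (0 : Γ) ≤ L (cs.simple i))
    -- `H` is the Hecke algebra of `(W, S, L)`, free over `ℤ[Γ]` with basis `{T_w}`
    {H : Type} [Ring H] [Algebra (LZ Γ) H]
    (T : Module.Basis W (LZ Γ) H)
    (hTone : T 1 = 1)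
    (hTmul₁ : ∀ (i : B) (w : W), cs.length w < cs.length (cs.simple i * w) →
      T (cs.simple i) * T w = T (cs.simple i * w))
    (hTmul₂ : ∀ (i : B) (w : W), cs.length (cs.simple i * w) < cs.length w →
      T (cs.simple i) * T w =
        qp Γ (L (cs.simple i)) • T (cs.simple i * w) + (qp Γ (L (cs.simple i)) - 1) • T w)
    -- the bar involution on `H`
    (barH : H ≃+* H)
    (hbarHsmul : ∀ (a : LZ Γ) (h : H), barH (a • h) = barZ Γ a • barH h)
    (hbarHT : ∀ i : B, barH (T (cs.simple i)) =
      qp Γ (-(L (cs.simple i))) • T (cs.simple i) + (qp Γ (-(L (cs.simple i))) - 1) • (1 : H))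
    -- `E = E_J ⊆ D_J` is an ideal in the left weak Bruhat order
    (J : Set B) (E : Set W)
    (hED : E ⊆ DJ cs J)
    (hIdeal : ∀ y ∈ E, ∀ x : W, IsSuffix cs x y → x ∈ E)
    -- `E` is a `W`-graph ideal: the module `M(E_J, L)` with basis `{Γ_y := G y : y ∈ E}`
    {MM : Type} [AddCommGroup MM] [Module (LZ Γ) MM] [Module H MM]
    [IsScalarTower (LZ Γ) H MM]
    (G : W → MM)
    (hGbasis : ∃ b : Module.Basis ↥E (LZ Γ) MM, ∀ y : ↥E, b y = G ↑y)
    (hSD : ∀ (i : B) (y : W), y ∈ E → cs.length (cs.simple i * y) < cs.length y →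
      T (cs.simple i) • G y =
        qp Γ (L (cs.simple i)) • G (cs.simple i * y) + (qp Γ (L (cs.simple i)) - 1) • G y)
    (hSA : ∀ (i : B) (y : W), y ∈ E → cs.length y < cs.length (cs.simple i * y) →
      cs.simple i * y ∈ E → T (cs.simple i) • G y = G (cs.simple i * y))
    (hWD : ∀ (i : B) (y : W), y ∈ E → cs.length y < cs.length (cs.simple i * y) →
      cs.simple i * y ∉ DJ cs J → T (cs.simple i) • G y = - G y)
    (hWA : ∀ (i : B) (y : W), y ∈ E → cs.length y < cs.length (cs.simple i * y) →
      cs.simple i * y ∈ DJ cs J → cs.simple i * y ∉ E →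
      ∃ rr : W → LZ Γ, (∀ z : W, rr z ≠ 0 → z ∈ E ∧ BruhatLT cs z (cs.simple i * y)) ∧
        (∀ z : W, ∃ g : LZ Γ, rr z = qp Γ (L (cs.simple i)) * g) ∧
        {z : W | rr z ≠ 0}.Finite ∧
        T (cs.simple i) • G y = qp Γ (L (cs.simple i)) • G y - ∑ᶠ z : W, rr z • G z)
    -- the `ℤ[Γ]`-semilinear bar involution on `M(E_J, L)`
    (barM : MM → MM)
    (hbarMadd : ∀ m m' : MM, barM (m + m') = barM m + barM m')
    (hbarMsmul : ∀ (a : LZ Γ) (m : MM), barM (a • m) = barZ Γ a • barM m)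
    (hbarMone : barM (G 1) = G 1)
    (hbarMT : ∀ (w y : W), y ∈ E → barM (T w • G y) = barH (T w) • barM (G y))
    -- the weighted `R`-polynomials
    (Rp : W → W → LZ Γ)
    (hRpzero : ∀ x y : W, x ∉ E ∨ y ∉ E → Rp x y = 0)
    (hRpdef : ∀ y ∈ E, barM (G y) =
      ∑ᶠ x ∈ E, (((eps cs x * eps cs y : ℤ) : LZ Γ) * qp Γ (-(L y)) * Rp x y) • G x)
    (x y : W) (hx : x ∈ E) (hy : y ∈ E)
    (hxy : BruhatLE cs x y)
    (r : ℕ) (c : Fin (r + 2) → W)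
    (hc0 : c 0 = x) (hclast : c (Fin.last (r + 1)) = y)
    (hcmem : ∀ i, c i ∈ E)
    (hcmono : ∀ i : Fin (r + 1), BruhatLE cs (c i.castSucc) (c i.succ))
    (hRne : RchainAux Γ L Rp r c ≠ 0)
    :
    ∀ i : Fin (r + 1), 1 ≤ (i : ℕ) → BruhatLT cs (c i.castSucc) (c i.succ) :=
  stmt_9_general cs Γ L hLadd T barH hbarHT J E hIdeal G hGbasis hSD hSA hWD hWA barM hbarMone
    hbarMT Rp hRpdef x y r c hcmem hcmono hRne

end WGI
end
end

section
/- For all x < y in E_J: P_{x,y} − 𝓡_{x,y} = Σ_{x ≤ t < y, t ∈ E_J} q_t^{−1} q_y 𝓡_{x,t} bar(P_{t,y}), where 𝓡_{x,t} denotes the 𝓡-polynomial of the length-one multichain x ≤ t. -/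
set_option linter.unusedVariables false

open scoped Classical
noncomputable section
/-!
Applying the bar involution to the defining identity
`q_x⁻¹ q_y bar(P_{x,y}) = Σ_{x ≤ t ≤ y} R_{x,t} P_{t,y}` gives
`P_{x,y} = Σ_{x ≤ t ≤ y} q_x⁻¹ q_y bar(R_{x,t}) bar(P_{t,y})`; the term `t = y` is `𝓡_{x,y}`
because `P_{y,y} = 1`, and `q_x⁻¹ q_y bar(R_{x,t}) = q_t⁻¹ q_y 𝓡_{x,t}` in the others.
Splitting off that term needs the sum to be finite, i.e. Bruhat lower intervals to be finite.
That comes down to finiteness of the set of inversions of `w`, which lie in the inversion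
sequence of any reduced word for `w` by the reflection cocycle argument of Björner–Brenti §1.4:
the simple reflection `s` acts on `W × ZMod 2` by `(t, ε) ↦ (s t s, ε + [t = s])`, this extends
to an action of `W`, and the `ZMod 2`-component of `w • (t, 0)` is the parity of the number of
occurrences of `t` in the inversion sequence of any word for `w`. For a right inversion `t` of `w`
that parity is `1`, because `w = (w t) t` and `t` is not an inversion of `w t`.
-/

namespace CoxeterSystem

variable {B W : Type*} [Group W] {M : CoxeterMatrix B} (cs : CoxeterSystem M W)

local prefix:100 "s" => cs.simple
local prefix:100 "π" => cs.wordProd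

def reflPermFun (i : B) (p : W × ZMod 2) : W × ZMod 2 :=
  (s i * p.1 * s i, p.2 + if p.1 = s i then 1 else 0)

lemma reflPermFun_involutive (i : B) : Function.Involutive (reflPermFun cs i) := by
  rintro ⟨t, ε⟩
  have hconj : s i * t * s i = s i ↔ t = s i := by
    constructor <;> intro h
    · simpa [mul_assoc] using congrArg (fun u => s i * u * s i) h
    · simp [h]
  simp only [reflPermFun, hconj]
  refine Prod.ext (by simp [mul_assoc]) ?_
  split_ifs <;> simp [add_assoc, CharTwo.add_self_eq_zero]

def reflPerm (i : B) : Equiv.Perm (W × ZMod 2) := (reflPermFun_involutive cs i).toPerm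

lemma reflPerm_apply (i : B) (t : W) (ε : ZMod 2) :
    reflPerm cs i (t, ε) = (s i * t * s i, ε + if t = s i then 1 else 0) := rfl

lemma reflPerm_mul_pow_apply (i j : B) (k : ℕ) (t : W) (ε : ZMod 2) :
    ((reflPerm cs i * reflPerm cs j) ^ k) (t, ε) =
      ((s i * s j) ^ k * t * ((s i * s j) ^ k)⁻¹,
        ε + ∑ l ∈ Finset.range (2 * k), if t = s j * (s i * s j) ^ l then 1 else 0) := by
  obtain ⟨p, hp⟩ : ∃ p, s i * s j = p := ⟨_, rfl⟩
  rw [hp]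
  have hp_inv : p⁻¹ * s j = s j * p := by simp [← hp, mul_assoc]
  have hshift : ∀ (t : W) (l : ℕ), p * t * p⁻¹ = s j * p ^ l ↔ t = s j * p ^ (l + 2) := by
    intro t l
    have hconj : p⁻¹ * (s j * p ^ l) * p = s j * p ^ (l + 2) := by
      rw [← mul_assoc, hp_inv, mul_assoc, mul_assoc, ← pow_succ, ← pow_succ']
    rw [← hconj]
    constructor <;> intro h
    · rw [← h]; group
    · rw [h]; group
  induction k generalizing t ε with
  | zero => simp
  | succ k ih =>
    have hstep : (reflPerm cs i * reflPerm cs j) (t, ε) = (p * t * p⁻¹, ε +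
        ((if t = s j * p ^ 0 then 1 else 0) + if t = s j * p ^ 1 then 1 else 0)) := by
      have hconj : s j * t * s j = s i ↔ t = s j * p ^ 1 := by
        rw [pow_one, ← hp]
        constructor <;> intro h
        · simp [← h, mul_assoc]
        · simp [h, mul_assoc]
      rw [Equiv.Perm.mul_apply, reflPerm_apply, reflPerm_apply, hconj, pow_zero, mul_one, ← hp]
      simp [mul_assoc, add_assoc]
    rw [pow_succ, Equiv.Perm.mul_apply, hstep, ih]
    refine Prod.ext (by simp only [pow_succ]; group) ?_
    simp only [hshift]
    rw [show 2 * (k + 1) = 2 * k + 1 + 1 by ring, Finset.sum_range_succ', Finset.sum_range_succ']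
    ring

lemma reflPerm_isLiftable : M.IsLiftable (reflPerm cs) := by
  intro i j
  ext1 ⟨t, ε⟩
  have hperiod : ∀ l, s j * (s i * s j) ^ (M i j + l) = s j * (s i * s j) ^ l := fun l => by
    rw [pow_add, cs.simple_mul_simple_pow, one_mul]
  rw [reflPerm_mul_pow_apply, cs.simple_mul_simple_pow, two_mul, Finset.sum_range_add]
  simp only [hperiod, CharTwo.add_self_eq_zero]
  simp

def reflRep : W →* Equiv.Perm (W × ZMod 2) := cs.lift ⟨reflPerm cs, reflPerm_isLiftable cs⟩

def reflCocycle (w t : W) : ZMod 2 := (reflRep cs w (t, 0)).2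

lemma reflRep_simple (i : B) : reflRep cs (s i) = reflPerm cs i :=
  cs.lift_apply_simple (reflPerm_isLiftable cs) i

lemma reflRep_apply (w t : W) (ε : ZMod 2) :
    reflRep cs w (t, ε) = (w * t * w⁻¹, ε + reflCocycle cs w t) := by
  induction w using cs.simple_induction_left generalizing t ε with
  | one => simp [reflCocycle]
  | mul_simple_left w i ih =>
    change _ = (_, ε + (reflRep cs (s i * w) (t, 0)).2)
    rw [map_mul, Equiv.Perm.mul_apply, Equiv.Perm.mul_apply, ih t ε, ih t 0, reflRep_simple,
      reflPerm_apply, reflPerm_apply]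
    exact Prod.ext (by simp [mul_assoc]) (by simp [add_assoc])

lemma reflCocycle_mul (u v t : W) :
    reflCocycle cs (u * v) t = reflCocycle cs v t + reflCocycle cs u (v * t * v⁻¹) := by
  change (reflRep cs (u * v) (t, 0)).2 = _
  rw [map_mul, Equiv.Perm.mul_apply, reflRep_apply cs v, reflRep_apply, zero_add]

lemma reflCocycle_one (t : W) : reflCocycle cs 1 t = 0 := by simp [reflCocycle]

lemma reflCocycle_simple (i : B) (t : W) :
    reflCocycle cs (s i) t = if t = s i then 1 else 0 := by
  simp [reflCocycle, reflRep_simple, reflPerm_apply]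

lemma reflCocycle_wordProd (ω : List B) (t : W) :
    reflCocycle cs (π ω) t = (cs.rightInvSeq ω).count t := by
  induction ω with
  | nil => simp [reflCocycle_one]
  | cons i ω ih =>
    have hconj : π ω * t * (π ω)⁻¹ = s i ↔ (π ω)⁻¹ * s i * π ω = t := by
      constructor <;> intro h <;> simp [← h, mul_assoc]
    rw [cs.wordProd_cons, reflCocycle_mul, reflCocycle_simple, ih, rightInvSeq,
      List.count_cons, hconj]
    split_ifs <;> simp_all

lemma reflCocycle_self {t : W} (ht : cs.IsReflection t) : reflCocycle cs t t = 1 := by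
  obtain ⟨u, i, rfl⟩ := ht
  have hback : u⁻¹ * (u * s i * u⁻¹) * u⁻¹⁻¹ = s i := by group
  have hinv := reflCocycle_mul cs u u⁻¹ (u * s i * u⁻¹)
  have hsi := reflCocycle_mul cs u (s i) (s i)
  rw [mul_inv_cancel, reflCocycle_one, hback] at hinv
  rw [cs.inv_simple, cs.simple_mul_simple_cancel_right, reflCocycle_simple, if_pos rfl] at hsi
  rw [reflCocycle_mul, hback, hsi]
  linear_combination -hinv

theorem mem_rightInvSeq_of_isRightInversion {ω : List B} (hω : cs.IsReduced ω) {t : W}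
    (ht : cs.IsRightInversion (π ω) t) : t ∈ cs.rightInvSeq ω := by
  obtain ⟨ω', hω', hw'⟩ := cs.exists_isReduced (π ω * t)
  have hcancel : π ω * t * t = π ω := by rw [mul_assoc, ht.1.mul_self, mul_one]
  have hnot : t ∉ cs.rightInvSeq ω' := fun hmem => by
    have hlt := (cs.isRightInversion_of_mem_rightInvSeq hω' hmem).2
    rw [← hw', hcancel] at hlt
    exact lt_asymm hlt ht.2
  have hcocycle : reflCocycle cs (π ω) t = 1 := by
    have h := reflCocycle_mul cs (π ω * t) t t
    rw [hcancel, ht.1.mul_self, one_mul, ht.1.inv, reflCocycle_self cs ht.1, hw',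
      reflCocycle_wordProd cs ω', List.count_eq_zero.mpr hnot] at h
    simpa using h
  rw [reflCocycle_wordProd] at hcocycle
  exact List.count_pos_iff.mp (Nat.pos_of_ne_zero fun h => by simp [h] at hcocycle)

theorem finite_setOf_isLeftInversion (w : W) : {t | cs.IsLeftInversion w t}.Finite := by
  obtain ⟨ω, hω, hw⟩ := cs.exists_isReduced w⁻¹
  refine (cs.rightInvSeq ω).finite_toSet.subset fun t ht => ?_
  exact mem_rightInvSeq_of_isRightInversion cs hω (hw ▸ cs.isRightInversion_inv_iff.mpr ht)

end CoxeterSystem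

namespace WGI

variable {B W : Type} [Group W] {M : CoxeterMatrix B} (cs : CoxeterSystem M W)

theorem finite_setOf_bruhatLE (y : W) : {u | BruhatLE cs u y}.Finite := by
  have hpred : {v | cs.length v < cs.length y ∧ ∃ t, cs.IsReflection t ∧ y = t * v}.Finite := by
    refine ((cs.finite_setOf_isLeftInversion y).image (· * y)).subset ?_
    rintro v ⟨hlen, t, ht, rfl⟩
    have hv : t * (t * v) = v := by rw [← mul_assoc, ht.mul_self, one_mul]
    exact ⟨t, ⟨ht, by rwa [hv]⟩, hv⟩
  refine ((hpred.biUnion fun v hv => finite_setOf_bruhatLE v).insert y).subset fun u hu => ?_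
  rcases Relation.ReflTransGen.cases_tail hu with rfl | ⟨v, huv, hvy⟩
  · exact Set.mem_insert _ _
  · exact Set.mem_insert_of_mem _ (Set.mem_biUnion hvy huv)
termination_by cs.length y
decreasing_by exact hv.1

variable (Γ : Type) [AddCommGroup Γ]

lemma qp_add (a b : Γ) : qp Γ (a + b) = qp Γ a * qp Γ b := by
  simp [qp, AddMonoidAlgebra.single_mul_single]

lemma barZ_qp (a : Γ) : barZ Γ (qp Γ a) = qp Γ (-a) := by
  simp [qp, barZ]

lemma barZ_barZ (f : LZ Γ) : barZ Γ (barZ Γ f) = f := by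
  ext γ
  simp [barZ]

lemma qp_mul_barZ_qp_mul_barZ (a : Γ) (f : LZ Γ) :
    qp Γ a * barZ Γ (qp Γ a * barZ Γ f) = f := by
  simp only [map_mul, barZ_qp, barZ_barZ, ← mul_assoc, ← qp_add, add_neg_cancel]
  exact one_mul f

theorem stmt_12_general
    {B W : Type} [Group W] {M : CoxeterMatrix B} (cs : CoxeterSystem M W)
    (Γ : Type) [AddCommGroup Γ] [LinearOrder Γ] [IsOrderedAddMonoid Γ]
    -- `L` is a weight function on `W` with values in `Γ`, nonnegative on simple reflections
    (L : W → Γ)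
    -- `E = E_J ⊆ D_J` is an ideal in the left weak Bruhat order
    (E : Set W)
    -- the weighted `R`-polynomials
    (Rp : W → W → LZ Γ)
    -- the weighted Kazhdan-Lusztig polynomials
    (P : W → W → LZ Γ)
    (hPdiag : ∀ x ∈ E, P x x = 1)
    (hPdef : ∀ x y : W, x ∈ E → y ∈ E → BruhatLE cs x y →
      qp Γ (L y - L x) * barZ Γ (P x y) =
        ∑ᶠ t ∈ {t : W | t ∈ E ∧ BruhatLE cs x t ∧ BruhatLE cs t y}, Rp x t * P t y)
    (x y : W) (hx : x ∈ E) (hy : y ∈ E)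
    (hxy : BruhatLT cs x y)
    :
    P x y - Rsingle Γ L Rp x y =
      ∑ᶠ t ∈ {t : W | t ∈ E ∧ BruhatLE cs x t ∧ BruhatLT cs t y},
        qp Γ (L y - L t) * Rsingle Γ L Rp x t * barZ Γ (P t y) := by
  have hfin : {t | t ∈ E ∧ BruhatLE cs x t ∧ BruhatLT cs t y}.Finite :=
    (finite_setOf_bruhatLE cs y).subset fun t ht => ht.2.2.1
  have hinterval : {t | t ∈ E ∧ BruhatLE cs x t ∧ BruhatLE cs t y} =
      insert y {t | t ∈ E ∧ BruhatLE cs x t ∧ BruhatLT cs t y} := by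
    ext t
    simp only [Set.mem_insert_iff, Set.mem_ofPred_eq, BruhatLT]
    by_cases hty : t = y
    · subst hty
      simpa [hy] using ⟨hxy.1, Relation.ReflTransGen.refl⟩
    · simp [hty]
  have hPxy := hPdef x y hx hy hxy.1
  rw [hinterval, finsum_mem_insert _ (fun h => h.2.2.2 rfl) hfin, hPdiag y hy, mul_one] at hPxy
  rw [← qp_mul_barZ_qp_mul_barZ Γ (L y - L x) (P x y), hPxy, map_add, mul_add,
    Rsingle, add_sub_cancel_left]
  simp only [AddEquivClass.map_finsum]
  rw [mul_finsum_mem' _ _ hfin]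
  refine finsum_mem_congr rfl fun t _ => ?_
  rw [map_mul, Rsingle, show L y - L x = (L y - L t) + (L t - L x) by abel, qp_add]
  ring

theorem stmt_12
    {B W : Type} [Group W] {M : CoxeterMatrix B} (cs : CoxeterSystem M W)
    (Γ : Type) [AddCommGroup Γ] [LinearOrder Γ] [IsOrderedAddMonoid Γ]
    -- `L` is a weight function on `W` with values in `Γ`, nonnegative on simple reflections
    (L : W → Γ)
    (hLadd : ∀ u v : W, cs.length (u * v) = cs.length u + cs.length v →
      L (u * v) = L u + L v)
    (hLpos : ∀ i : B, (0 : Γ) ≤ L (cs.simple i))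
    -- `H` is the Hecke algebra of `(W, S, L)`, free over `ℤ[Γ]` with basis `{T_w}`
    {H : Type} [Ring H] [Algebra (LZ Γ) H]
    (T : Module.Basis W (LZ Γ) H)
    (hTone : T 1 = 1)
    (hTmul₁ : ∀ (i : B) (w : W), cs.length w < cs.length (cs.simple i * w) →
      T (cs.simple i) * T w = T (cs.simple i * w))
    (hTmul₂ : ∀ (i : B) (w : W), cs.length (cs.simple i * w) < cs.length w →
      T (cs.simple i) * T w =
        qp Γ (L (cs.simple i)) • T (cs.simple i * w) + (qp Γ (L (cs.simple i)) - 1) • T w)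
    -- the bar involution on `H`
    (barH : H ≃+* H)
    (hbarHsmul : ∀ (a : LZ Γ) (h : H), barH (a • h) = barZ Γ a • barH h)
    (hbarHT : ∀ i : B, barH (T (cs.simple i)) =
      qp Γ (-(L (cs.simple i))) • T (cs.simple i) + (qp Γ (-(L (cs.simple i))) - 1) • (1 : H))
    -- `E = E_J ⊆ D_J` is an ideal in the left weak Bruhat order
    (J : Set B) (E : Set W)
    (hED : E ⊆ DJ cs J)
    (hIdeal : ∀ y ∈ E, ∀ x : W, IsSuffix cs x y → x ∈ E)
    -- `E` is a `W`-graph ideal: the module `M(E_J, L)` with basis `{Γ_y := G y : y ∈ E}`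
    {MM : Type} [AddCommGroup MM] [Module (LZ Γ) MM] [Module H MM]
    [IsScalarTower (LZ Γ) H MM]
    (G : W → MM)
    (hGbasis : ∃ b : Module.Basis ↥E (LZ Γ) MM, ∀ y : ↥E, b y = G ↑y)
    (hSD : ∀ (i : B) (y : W), y ∈ E → cs.length (cs.simple i * y) < cs.length y →
      T (cs.simple i) • G y =
        qp Γ (L (cs.simple i)) • G (cs.simple i * y) + (qp Γ (L (cs.simple i)) - 1) • G y)
    (hSA : ∀ (i : B) (y : W), y ∈ E → cs.length y < cs.length (cs.simple i * y) →
      cs.simple i * y ∈ E → T (cs.simple i) • G y = G (cs.simple i * y))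
    (hWD : ∀ (i : B) (y : W), y ∈ E → cs.length y < cs.length (cs.simple i * y) →
      cs.simple i * y ∉ DJ cs J → T (cs.simple i) • G y = - G y)
    (hWA : ∀ (i : B) (y : W), y ∈ E → cs.length y < cs.length (cs.simple i * y) →
      cs.simple i * y ∈ DJ cs J → cs.simple i * y ∉ E →
      ∃ rr : W → LZ Γ, (∀ z : W, rr z ≠ 0 → z ∈ E ∧ BruhatLT cs z (cs.simple i * y)) ∧
        (∀ z : W, ∃ g : LZ Γ, rr z = qp Γ (L (cs.simple i)) * g) ∧
        {z : W | rr z ≠ 0}.Finite ∧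
        T (cs.simple i) • G y = qp Γ (L (cs.simple i)) • G y - ∑ᶠ z : W, rr z • G z)
    -- the `ℤ[Γ]`-semilinear bar involution on `M(E_J, L)`
    (barM : MM → MM)
    (hbarMadd : ∀ m m' : MM, barM (m + m') = barM m + barM m')
    (hbarMsmul : ∀ (a : LZ Γ) (m : MM), barM (a • m) = barZ Γ a • barM m)
    (hbarMone : barM (G 1) = G 1)
    (hbarMT : ∀ (w y : W), y ∈ E → barM (T w • G y) = barH (T w) • barM (G y))
    -- the weighted `R`-polynomials
    (Rp : W → W → LZ Γ)
    (hRpzero : ∀ x y : W, x ∉ E ∨ y ∉ E → Rp x y = 0)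
    (hRpdef : ∀ y ∈ E, barM (G y) =
      ∑ᶠ x ∈ E, (((eps cs x * eps cs y : ℤ) : LZ Γ) * qp Γ (-(L y)) * Rp x y) • G x)
    -- the weighted Kazhdan-Lusztig polynomials
    (P : W → W → LZ Γ)
    (hPdiag : ∀ x ∈ E, P x x = 1)
    (hPsupp : ∀ x y : W, ¬ BruhatLE cs x y → P x y = 0)
    (hPdeg : ∀ x y : W, x ∈ E → y ∈ E → BruhatLT cs x y → P x y ≠ 0 →
      ∃ d : Γ, degq Γ (P x y) = (d : WithBot Γ) ∧ d + d < L y - L x)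
    (hPdef : ∀ x y : W, x ∈ E → y ∈ E → BruhatLE cs x y →
      qp Γ (L y - L x) * barZ Γ (P x y) =
        ∑ᶠ t ∈ {t : W | t ∈ E ∧ BruhatLE cs x t ∧ BruhatLE cs t y}, Rp x t * P t y)
    (x y : W) (hx : x ∈ E) (hy : y ∈ E)
    (hxy : BruhatLT cs x y)
    :
    P x y - Rsingle Γ L Rp x y =
      ∑ᶠ t ∈ {t : W | t ∈ E ∧ BruhatLE cs x t ∧ BruhatLT cs t y},
        qp Γ (L y - L t) * Rsingle Γ L Rp x t * barZ Γ (P t y) :=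
  stmt_12_general cs Γ L E Rp P hPdiag hPdef x y hx hy hxy

end WGI
end
end
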